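/- For any connected pointed CW complexes X and Y, the topological complexity of the wedge satisfies the lower bound TC(X∨Y) ≥ max{TC(X), TC(Y), cat(X×Y)}. -/

import Mathlib

open Metric Set unitInterval

/-- A CW structure on the subset `C` of the ambient topological space `X`, given by
characteristic maps of cells, which are defined on closed balls in `Fin n → ℝ`,
are homeomorphisms from the open ball onto the corresponding open cell, satisfy
closure-finiteness, and induce the weak topology on `C`. -/
structure CWStruct {X : Type} [TopologicalSpace X] (C : Set X) : Type 1 where
  /-- the index type of the `n`-cells -/
  cell : ℕ → Type
  /-- the characteristic map of each `n`-cell -/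
  map : (n : ℕ) → cell n → PartialEquiv (Fin n → ℝ) X
  source_eq : ∀ n i, (map n i).source = ball 0 1
  continuousOn : ∀ n i, ContinuousOn (map n i) (closedBall 0 1)
  continuousOn_symm : ∀ n i, ContinuousOn (map n i).symm (map n i).target
  pairwiseDisjoint :
    (Set.univ : Set (Σ n, cell n)).PairwiseDisjoint (fun ni => map ni.1 ni.2 '' ball 0 1)
  mapsTo : ∀ n i, ∃ Js : Π m, Finset (cell m),
    Set.MapsTo (map n i) (sphere 0 1)
      (⋃ m, ⋃ (_ : m < n), ⋃ j ∈ Js m, map m j '' closedBall 0 1)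
  closed' : ∀ A : Set X, A ⊆ C →
    (∀ n j, IsClosed (A ∩ map n j '' closedBall 0 1)) → IsClosed A
  union' : ⋃ n, ⋃ j, map n j '' closedBall 0 1 = C

/-- The dimension of a CW structure: the supremum of the dimensions of its cells. -/
noncomputable def CWStruct.dim {X : Type} [TopologicalSpace X] {C : Set X}
    (K : CWStruct C) : ℕ∞ :=
  sSup {N : ℕ∞ | ∃ n : ℕ, N = n ∧ Nonempty (K.cell n)}

/-- `K'` is a subcomplex of `K` if every cell of `K'` is a cell of `K`
(with the same characteristic map). -/
def CWStruct.IsSubcomplexOf {X : Type} [TopologicalSpace X] {C C' : Set X}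
    (K' : CWStruct C') (K : CWStruct C) : Prop :=
  C' ⊆ C ∧ ∀ n, ∃ f : K'.cell n → K.cell n,
    Function.Injective f ∧ ∀ i, K.map n (f i) = K'.map n i

/-- The reduced topological complexity of a space `X`, valued in `ℕ∞`: the least `n` such
that `X × X` admits a cover by `n + 1` open sets, each admitting a continuous motion
planning algorithm. -/
noncomputable def tc (X : Type*) [TopologicalSpace X] : ℕ∞ :=
  sInf {N : ℕ∞ | ∃ n : ℕ, N = n ∧ ∃ U : Fin (n + 1) → Set (X × X),
    (∀ i, IsOpen (U i)) ∧ (∀ p : X × X, ∃ i, p ∈ U i) ∧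
    ∀ i, ∃ s : C(U i, C(I, X)), ∀ p : U i,
      s p 0 = (p : X × X).1 ∧ s p 1 = (p : X × X).2}

/-- The reduced Lusternik–Schnirelmann category of a space `X`, valued in `ℕ∞`: the least `n`
such that `X` admits a cover by `n + 1` open sets whose inclusions into `X` are
null-homotopic. -/
noncomputable def lscat (X : Type*) [TopologicalSpace X] : ℕ∞ :=
  sInf {N : ℕ∞ | ∃ n : ℕ, N = n ∧ ∃ U : Fin (n + 1) → Set X,
    (∀ i, IsOpen (U i)) ∧ (∀ x : X, ∃ i, x ∈ U i) ∧
    ∀ i, ∃ x₀ : X, ContinuousMap.Homotopic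
      (⟨fun p : U i => (p : X), continuous_subtype_val⟩ : C(U i, X))
      (ContinuousMap.const (U i) x₀)}

/-- The cohomological dimension of a group `G`: the supremum of all `n` such that
the group cohomology `Hⁿ(G; M)` is nonzero for some `ℤG`-module `M`. -/
noncomputable def cd (G : Type) [Group G] : ℕ∞ :=
  sSup {N : ℕ∞ | ∃ n : ℕ, N = n ∧ ∃ M : Rep ℤ G, Nontrivial (groupCohomology M n)}

/-- `X` (with base point `x`) is a classifying space (an aspherical Eilenberg–MacLane space
`K(G,1)`) for the group `G`. -/
structure IsClassifyingSpace (G : Type) [Group G] (X : Type) [TopologicalSpace X]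
    (x : X) : Prop where
  pathConnected : PathConnectedSpace X
  aspherical : ∀ n : ℕ, 2 ≤ n → Subsingleton (HomotopyGroup (Fin n) X x)
  pi1 : Nonempty (FundamentalGroup X x ≃* G)

/-- The wedge (one-point union) of two pointed spaces `(X, x₀)` and `(Y, y₀)`: the quotient
of the disjoint union of `X` and `Y` identifying the two base points. -/
def Wedge {X Y : Type} [TopologicalSpace X] [TopologicalSpace Y] (x₀ : X) (y₀ : Y) : Type :=
  Quot (fun a b : X ⊕ Y => a = Sum.inl x₀ ∧ b = Sum.inr y₀)

instance {X Y : Type} [TopologicalSpace X] [TopologicalSpace Y] (x₀ : X) (y₀ : Y) :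
    TopologicalSpace (Wedge x₀ y₀) :=
  inferInstanceAs (TopologicalSpace (Quot _))

/-!
`X` and `Y` are retracts of `X ∨ Y`, and a motion-planning cover of `Z × Z` pulls back to one of
`A × A` whenever `A` is a retract of `Z`. For `cat (X × Y)`, pull a motion-planning cover of
`(X ∨ Y)²` back along `(x, y) ↦ (x, y)`: on each piece the planner gives a path from `x` to `y`
in `X ∨ Y`, which the two retractions turn into a path from `x` to `x₀` in `X` and a path from
`y₀` to `y` in `Y`; together they contract the piece to `(x₀, y₀)`.
-/

open ContinuousMap

theorem ContinuousMap.homotopic_of_paths {V Z : Type*} [TopologicalSpace V] [TopologicalSpace Z]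
    {f₀ f₁ : C(V, Z)} (γ : C(V, C(I, Z))) (h₀ : ∀ v, γ v 0 = f₀ v) (h₁ : ∀ v, γ v 1 = f₁ v) :
    f₀.Homotopic f₁ :=
  ⟨⟨⟨fun x => γ x.2 x.1, by fun_prop⟩, h₀, h₁⟩⟩

section OpenCoverNumber

variable {A B : Type*} [TopologicalSpace A] [TopologicalSpace B]

noncomputable def openCoverNumber (P : Set A → Prop) : ℕ∞ :=
  sInf {N : ℕ∞ | ∃ n : ℕ, N = n ∧ ∃ U : Fin (n + 1) → Set A,
    (∀ i, IsOpen (U i)) ∧ (∀ x : A, ∃ i, x ∈ U i) ∧ ∀ i, P (U i)}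

theorem openCoverNumber_le_of_preimage {P : Set A → Prop} {Q : Set B → Prop} {e : A → B}
    (he : Continuous e) (h : ∀ U, Q U → P (e ⁻¹' U)) :
    openCoverNumber P ≤ openCoverNumber Q := by
  refine le_sInf ?_
  rintro _ ⟨n, rfl, U, hU_open, hU_cover, hU⟩
  exact sInf_le ⟨n, rfl, fun i => e ⁻¹' U i, fun i => (hU_open i).preimage he,
    fun x => hU_cover (e x), fun i => h _ (hU i)⟩

end OpenCoverNumber

section MotionPlanner

variable {A Z : Type*} [TopologicalSpace A] [TopologicalSpace Z]

def HasMotionPlanner (U : Set (Z × Z)) : Prop :=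
  ∃ s : C(U, C(I, Z)), ∀ p : U, s p 0 = (p : Z × Z).1 ∧ s p 1 = (p : Z × Z).2

theorem tc_eq_openCoverNumber : tc Z = openCoverNumber (HasMotionPlanner (Z := Z)) := rfl

theorem lscat_eq_openCoverNumber :
    lscat A = openCoverNumber fun U : Set A =>
      Nullhomotopic (⟨Subtype.val, continuous_subtype_val⟩ : C(U, A)) :=
  rfl

theorem HasMotionPlanner.exists_preimage {U : Set (Z × Z)} (hU : HasMotionPlanner U)
    (e : C(A, Z × Z)) :
    ∃ γ : C(e ⁻¹' U, C(I, Z)), ∀ a : e ⁻¹' U, γ a 0 = (e a).1 ∧ γ a 1 = (e a).2 := by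
  obtain ⟨s, hs⟩ := hU
  exact ⟨s.comp (e.restrictPreimage U), fun a => hs _⟩

theorem HasMotionPlanner.preimage_prodMap_of_leftInverse {U : Set (Z × Z)}
    (hU : HasMotionPlanner U) {ι : C(A, Z)} {r : C(Z, A)} (hrι : ∀ a, r (ι a) = a) :
    HasMotionPlanner (ι.prodMap ι ⁻¹' U) := by
  obtain ⟨γ, hγ⟩ := hU.exists_preimage (ι.prodMap ι)
  exact ⟨⟨fun p => r.comp (γ p), by fun_prop⟩, fun p => by simp [(hγ p).1, (hγ p).2, hrι]⟩

theorem tc_le_of_leftInverse (ι : C(A, Z)) (r : C(Z, A)) (hrι : ∀ a, r (ι a) = a) :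
    tc A ≤ tc Z := by
  rw [tc_eq_openCoverNumber, tc_eq_openCoverNumber]
  exact openCoverNumber_le_of_preimage (ι.prodMap ι).continuous
    fun _ hU => hU.preimage_prodMap_of_leftInverse hrι

end MotionPlanner

theorem HasMotionPlanner.nullhomotopic_preimage_prodMap {X Y Z : Type*} [TopologicalSpace X]
    [TopologicalSpace Y] [TopologicalSpace Z] {U : Set (Z × Z)} (hU : HasMotionPlanner U)
    {ιX : C(X, Z)} {ιY : C(Y, Z)} {rX : C(Z, X)} {rY : C(Z, Y)} {x₀ : X} {y₀ : Y}
    (hX : ∀ x, rX (ιX x) = x) (hY : ∀ y, rY (ιY y) = y)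
    (hXY : ∀ y, rX (ιY y) = x₀) (hYX : ∀ x, rY (ιX x) = y₀) :
    Nullhomotopic (⟨Subtype.val, continuous_subtype_val⟩ : C(ιX.prodMap ιY ⁻¹' U, X × Y)) := by
  obtain ⟨γ, hγ⟩ := hU.exists_preimage (ιX.prodMap ιY)
  have hfst : (fst.comp ⟨Subtype.val, continuous_subtype_val⟩).Homotopic
      (const (ιX.prodMap ιY ⁻¹' U) x₀) :=
    homotopic_of_paths ⟨fun p => rX.comp (γ p), by fun_prop⟩
      (fun p => by simp [(hγ p).1, hX]) (fun p => by simp [(hγ p).2, hXY])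
  have hsnd : (const (ιX.prodMap ιY ⁻¹' U) y₀).Homotopic
      (snd.comp ⟨Subtype.val, continuous_subtype_val⟩) :=
    homotopic_of_paths ⟨fun p => rY.comp (γ p), by fun_prop⟩
      (fun p => by simp [(hγ p).1, hYX]) (fun p => by simp [(hγ p).2, hY])
  exact ⟨(x₀, y₀), ⟨hfst.some.prod hsnd.symm.some⟩⟩

theorem lscat_prod_le_tc {X Y Z : Type*} [TopologicalSpace X]
    [TopologicalSpace Y] [TopologicalSpace Z]
    (ιX : C(X, Z)) (ιY : C(Y, Z)) (rX : C(Z, X)) (rY : C(Z, Y)) (x₀ : X) (y₀ : Y)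
    (hX : ∀ x, rX (ιX x) = x) (hY : ∀ y, rY (ιY y) = y)
    (hXY : ∀ y, rX (ιY y) = x₀) (hYX : ∀ x, rY (ιX x) = y₀) :
    lscat (X × Y) ≤ tc Z := by
  rw [lscat_eq_openCoverNumber, tc_eq_openCoverNumber]
  exact openCoverNumber_le_of_preimage (ιX.prodMap ιY).continuous
    fun _ hU => hU.nullhomotopic_preimage_prodMap hX hY hXY hYX

namespace Wedge

variable {X Y : Type} [TopologicalSpace X] [TopologicalSpace Y] (x₀ : X) (y₀ : Y)

def inl : C(X, Wedge x₀ y₀) :=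
  ⟨fun x => Quot.mk _ (Sum.inl x), continuous_quot_mk.comp continuous_inl⟩

def inr : C(Y, Wedge x₀ y₀) :=
  ⟨fun y => Quot.mk _ (Sum.inr y), continuous_quot_mk.comp continuous_inr⟩

def retractLeft : C(Wedge x₀ y₀, X) :=
  ⟨Quot.lift (Sum.elim id fun _ => x₀) (by rintro _ _ ⟨rfl, rfl⟩; rfl),
    continuous_quot_lift _ (continuous_id.sumElim continuous_const)⟩

def retractRight : C(Wedge x₀ y₀, Y) :=
  ⟨Quot.lift (Sum.elim (fun _ => y₀) id) (by rintro _ _ ⟨rfl, rfl⟩; rfl),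
    continuous_quot_lift _ (continuous_const.sumElim continuous_id)⟩

end Wedge

theorem le_tc_wedge_general (X Y : Type) [TopologicalSpace X] [TopologicalSpace Y]
    (x₀ : X) (y₀ : Y) :
    max (max (tc X) (tc Y)) (lscat (X × Y)) ≤ tc (Wedge x₀ y₀) := by
  refine max_le (max_le ?_ ?_) ?_
  · exact tc_le_of_leftInverse (Wedge.inl x₀ y₀) (Wedge.retractLeft x₀ y₀) fun _ => rfl
  · exact tc_le_of_leftInverse (Wedge.inr x₀ y₀) (Wedge.retractRight x₀ y₀) fun _ => rfl
  · exact lscat_prod_le_tc (Wedge.inl x₀ y₀) (Wedge.inr x₀ y₀) (Wedge.retractLeft x₀ y₀)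
      (Wedge.retractRight x₀ y₀) x₀ y₀ (fun _ => rfl) (fun _ => rfl) (fun _ => rfl) (fun _ => rfl)

/-- The lower bound for the topological complexity of a wedge:
`TC (X ∨ Y) ≥ max {TC X, TC Y, cat (X × Y)}` for connected CW complexes `X` and `Y`. -/
theorem le_tc_wedge (X Y : Type) [TopologicalSpace X] [TopologicalSpace Y]
    [ConnectedSpace X] [ConnectedSpace Y]
    (KX : CWStruct (Set.univ : Set X)) (KY : CWStruct (Set.univ : Set Y))
    (x₀ : X) (y₀ : Y) :
    max (max (tc X) (tc Y)) (lscat (X × Y)) ≤ tc (Wedge x₀ y₀) :=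
  le_tc_wedge_general X Y x₀ y₀
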